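/- arXiv:0903.4542 — 4 statements merged into one kernel-verified Lean document; each statement's English description precedes it below -/
import Mathlib

section
/- For all x ≠ 0, the derivative of F at x equals 1/x² - e^x/(e^x - 1)², and this quantity is strictly positive. -/
open Real Filter MeasureTheory

noncomputable def F : ℝ → ℝ := fun x =>
  if x = 0 then 1/2 else Real.exp x / (Real.exp x - 1) - 1/x

/-
The derivative formula is the quotient rule away from the removable point `0`. Positivity
comes from `(eˣ - 1)² = eˣ (2 sinh (x/2))²`, so that `eˣ/(eˣ - 1)² = 1/(2 sinh (x/2))²`,
together with `|sinh t| > |t|` for `t ≠ 0`.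
-/

namespace Real

theorem sq_lt_sinh_sq {x : ℝ} (hx : x ≠ 0) : x ^ 2 < sinh x ^ 2 := by
  rw [← sq_abs, ← sq_abs (sinh x), abs_sinh]
  exact pow_lt_pow_left₀ (self_lt_sinh_iff.mpr (abs_pos.mpr hx)) (abs_nonneg x) two_ne_zero

theorem exp_sub_one_sq_eq (x : ℝ) : (exp x - 1) ^ 2 = exp x * (2 * sinh (x / 2)) ^ 2 := by
  have hsq : exp x = exp (x / 2) ^ 2 := by rw [← exp_nat_mul]; ring_nf
  rw [sinh_eq, exp_neg, hsq]
  field_simp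

theorem exp_sub_one_ne_zero {x : ℝ} (hx : x ≠ 0) : exp x - 1 ≠ 0 :=
  sub_ne_zero.mpr (mt (exp_eq_one_iff x).mp hx)

theorem exp_div_exp_sub_one_sq_lt {x : ℝ} (hx : x ≠ 0) :
    exp x / (exp x - 1) ^ 2 < 1 / x ^ 2 := by
  have hsinh : x ^ 2 < (2 * sinh (x / 2)) ^ 2 := by
    calc x ^ 2 = 2 ^ 2 * (x / 2) ^ 2 := by ring
      _ < 2 ^ 2 * sinh (x / 2) ^ 2 :=
        mul_lt_mul_of_pos_left (sq_lt_sinh_sq (div_ne_zero hx two_ne_zero)) (by norm_num)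
      _ = (2 * sinh (x / 2)) ^ 2 := by ring
  rw [exp_sub_one_sq_eq, div_mul_cancel_left₀ (exp_pos x).ne', ← one_div]
  exact one_div_lt_one_div_of_lt (by positivity) hsinh

theorem hasDerivAt_exp_div_exp_sub_one {x : ℝ} (hx : x ≠ 0) :
    HasDerivAt (fun y => exp y / (exp y - 1)) (-exp x / (exp x - 1) ^ 2) x := by
  refine ((hasDerivAt_exp x).div ((hasDerivAt_exp x).sub_const 1)
    (exp_sub_one_ne_zero hx)).congr_deriv ?_
  ring

end Real

theorem F_eventuallyEq_of_ne_zero {x : ℝ} (hx : x ≠ 0) :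
    F =ᶠ[nhds x] fun y => exp y / (exp y - 1) - 1 / y := by
  filter_upwards [isOpen_ne.mem_nhds hx] with y hy
  simp [F, hy]

theorem F_hasDerivAt_ne_zero (x : ℝ) (hx : x ≠ 0) :
    HasDerivAt F (1/x^2 - Real.exp x / (Real.exp x - 1)^2) x ∧
    0 < 1/x^2 - Real.exp x / (Real.exp x - 1)^2 := by
  refine ⟨?_, sub_pos.mpr (exp_div_exp_sub_one_sq_lt hx)⟩
  have hinv : HasDerivAt (fun y : ℝ => 1 / y) (-(x ^ 2)⁻¹) x := by
    simpa only [one_div] using hasDerivAt_inv hx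
  refine (((hasDerivAt_exp_div_exp_sub_one hx).sub hinv).congr_of_eventuallyEq
    (F_eventuallyEq_of_ne_zero hx)).congr_deriv ?_
  ring
end

section
/- F is differentiable at 0 and F'(0) = 1/12. -/
open Real Filter MeasureTheory

-- exp x - 1 ≠ 0 for x ≠ 0
lemma exp_sub_one_ne (x : ℝ) (h : x ≠ 0) : Real.exp x - 1 ≠ 0 := by
  intro hc
  exact h ((Real.exp_eq_one_iff x).mp (by linarith))

-- lower bound on |exp x - 1|
lemma exp_sub_one_lb (x : ℝ) (hx : |x| ≤ 1) : |x| / 2 ≤ |Real.exp x - 1| := by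
  rcases le_or_gt 0 x with h | h
  · have h1 : x ≤ Real.exp x - 1 := by have := Real.add_one_le_exp x; linarith
    rw [abs_of_nonneg h, abs_of_nonneg (by linarith)]
    linarith
  · have hx1 : -1 ≤ x := by rw [abs_of_neg h] at hx; linarith
    have h2 : Real.exp x ≤ 1 / (1 - x) := by
      have h3 : 1 - x ≤ Real.exp (-x) := by have := Real.add_one_le_exp (-x); linarith
      have h4 : (0:ℝ) < 1 - x := by linarith
      rw [Real.exp_neg] at h3
      rw [div_eq_inv_mul, mul_one]
      exact (le_inv_comm₀ h4 (Real.exp_pos x)).mp h3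
    have h5 : 1 / (1 - x) ≤ 1 + x / 2 := by
      rw [div_le_iff₀ (by linarith)]
      nlinarith
    rw [abs_of_neg h, abs_of_neg (by nlinarith [Real.exp_pos x] : Real.exp x - 1 < 0)]
    linarith

-- Taylor bound for N
lemma N_bound (x : ℝ) (hx : |x| ≤ 1) :
    |Real.exp x * (6*x - 12 - x^2) + x^2 + 6*x + 12| ≤ |x|^5 := by
  have hb := Real.exp_bound hx (n := 5) (by norm_num)
  set T : ℝ := ∑ m ∈ Finset.range 5, x ^ m / m.factorial with hT
  have hTval : T = 1 + x + x^2/2 + x^3/6 + x^4/24 := by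
    norm_num [hT, Finset.sum_range_succ, Nat.factorial]
  have hbb : |Real.exp x - T| ≤ |x|^5 * (1/100) := by
    convert hb using 2
    norm_num [Nat.factorial]
  set r : ℝ := Real.exp x - T with hr
  have key : Real.exp x * (6*x - 12 - x^2) + x^2 + 6*x + 12
      = x^5/12 - x^6/24 + r * (6*x - 12 - x^2) := by
    have : Real.exp x = T + r := by simp [hr]
    rw [this, hTval]; ring
  rw [key]
  have h1 : |x^5/12 - x^6/24 + r * (6*x - 12 - x^2)|
      ≤ |x|^5/12 + |x|^6/24 + |r| * |6*x - 12 - x^2| := by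
    calc _ ≤ |x^5/12 - x^6/24| + |r * (6*x - 12 - x^2)| := abs_add_le _ _
    _ ≤ |x^5/12| + |x^6/24| + |r| * |6*x - 12 - x^2| := by
        rw [abs_mul]; linarith [abs_sub (x^5/12) (x^6/24)]
    _ = |x|^5/12 + |x|^6/24 + |r| * |6*x - 12 - x^2| := by
        rw [abs_div, abs_div, abs_pow, abs_pow]; norm_num
  have h2 : |6*x - 12 - x^2| ≤ 19 := by
    have := abs_le.mp hx
    rw [abs_le]
    constructor <;> nlinarith
  have h3 : |x|^6 ≤ |x|^5 := by
    apply pow_le_pow_of_le_one (abs_nonneg x) hx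
    norm_num
  have h4 : |r| * |6*x - 12 - x^2| ≤ |x|^5 * (1/100) * 19 := by
    apply mul_le_mul hbb h2 (abs_nonneg _)
    positivity
  have h5 : (0:ℝ) ≤ |x|^5 := by positivity
  linarith

theorem F_hasDerivAt_zero : HasDerivAt F (1/12) 0 := by
  rw [hasDerivAt_iff_tendsto_slope, ← tendsto_sub_nhds_zero_iff]
  have habs : Tendsto (fun x : ℝ => |x|) (nhdsWithin 0 {(0:ℝ)}ᶜ) (nhds 0) := by
    have : Tendsto (fun x : ℝ => |x|) (nhds 0) (nhds 0) := by
      simpa using continuous_abs.tendsto (0:ℝ)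
    exact this.mono_left nhdsWithin_le_nhds
  apply squeeze_zero_norm' (a := fun x : ℝ => |x|) _ habs
  have h1 : ∀ᶠ x in nhdsWithin (0:ℝ) {(0:ℝ)}ᶜ, |x| ≤ 1 := by
    apply eventually_nhdsWithin_of_eventually_nhds
    filter_upwards [eventually_abs_sub_lt (0:ℝ) one_pos] with x hx
    simpa using hx.le
  filter_upwards [h1, self_mem_nhdsWithin] with x hx hx0
  simp only [Set.mem_compl_iff, Set.mem_singleton_iff] at hx0
  have hex : Real.exp x - 1 ≠ 0 := exp_sub_one_ne x hx0
  have hFx : F x = Real.exp x / (Real.exp x - 1) - 1/x := by simp [F, hx0]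
  have hF0 : F 0 = 1/2 := by simp [F]
  have hslope : slope F 0 x - 1/12
      = (Real.exp x * (6*x - 12 - x^2) + x^2 + 6*x + 12) / (12 * x^2 * (Real.exp x - 1)) := by
    rw [slope_def_field, hFx, hF0]
    field_simp
    ring
  rw [Real.norm_eq_abs, hslope, abs_div]
  have hden : |12 * x^2 * (Real.exp x - 1)| = 12 * x^2 * |Real.exp x - 1| := by
    rw [abs_mul, abs_mul]
    rw [abs_of_nonneg (by positivity : (0:ℝ) ≤ 12), abs_of_nonneg (sq_nonneg x)]
  have hdenpos : 0 < 12 * x^2 * |Real.exp x - 1| := by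
    have := abs_pos.mpr hex
    have hx2 : 0 < x^2 := by positivity
    positivity
  rw [hden, div_le_iff₀ hdenpos]
  have hN := N_bound x hx
  have hlb := exp_sub_one_lb x hx
  have hxabs : 0 < |x| := abs_pos.mpr hx0
  have hx2 : x^2 = |x|^2 := (sq_abs x).symm
  calc |Real.exp x * (6*x - 12 - x^2) + x^2 + 6*x + 12| ≤ |x|^5 := hN
    _ ≤ |x| * (12 * x^2 * (|x|/2)) := by
        rw [hx2]
        have : |x|^5 ≤ |x|^4 := pow_le_pow_of_le_one (abs_nonneg x) hx (by norm_num)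
        nlinarith [pow_nonneg (abs_nonneg x) 4]
    _ ≤ |x| * (12 * x^2 * |Real.exp x - 1|) := by
        apply mul_le_mul_of_nonneg_left _ (abs_nonneg x)
        apply mul_le_mul_of_nonneg_left hlb (by positivity)
end

section
/- Let K_i < K_{i+1} and K̄ ∈ (K_i, K_{i+1}). Then there exist unique α_i > 0 (determined once β_i is found) and β_i ∈ ℝ such that the density g(x) = α_i e^{β_i x} on [K_i, K_{i+1}) satisfies ∫_{K_i}^{K_{i+1}} g(x) dx = M and ∫_{K_i}^{K_{i+1}} x g(x) dx = K̄ · M, for any given M > 0. -/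
/-! The conditions on `(α, β)` split: the mean condition says that
`J(β) = ∫_{K_i}^{K_{i+1}} (x - K̄) e^{β (x - K̄)} dx` vanishes, and the mass condition then fixes
`α = M / ∫ e^{β x}`. Since `x - K̄` and `e^{β₂ (x - K̄)} - e^{β₁ (x - K̄)}` have the same sign when
`β₁ < β₂`, `J` is strictly increasing; it is positive for large `β` (the mass of `[K̄, K_{i+1}]`
dominates) and, by the reflection `x ↦ -x`, negative for very negative `β`, so it has exactly one
zero. -/

open Real MeasureTheory

noncomputable def centeredExpMoment (a b c β : ℝ) : ℝ :=
  ∫ x in a..b, (x - c) * exp (β * (x - c))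

theorem mul_exp_sub_exp_pos {u β₁ β₂ : ℝ} (hβ : β₁ < β₂) (hu : u ≠ 0) :
    0 < u * (exp (β₂ * u) - exp (β₁ * u)) := by
  rcases hu.lt_or_gt with hu | hu
  · have : exp (β₂ * u) < exp (β₁ * u) := exp_lt_exp.2 (by nlinarith)
    exact mul_pos_of_neg_of_neg hu (by linarith)
  · have : exp (β₁ * u) < exp (β₂ * u) := exp_lt_exp.2 (by nlinarith)
    exact mul_pos hu (by linarith)

namespace centeredExpMoment

variable {a b c : ℝ}

theorem integrand_intervalIntegrable (a b c β : ℝ) :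
    IntervalIntegrable (fun x => (x - c) * exp (β * (x - c))) volume a b :=
  (by fun_prop : Continuous fun x => (x - c) * exp (β * (x - c))).intervalIntegrable a b

theorem continuous (a b c : ℝ) : Continuous (centeredExpMoment a b c) :=
  intervalIntegral.continuous_parametric_intervalIntegral_of_continuous' (by fun_prop) a b

theorem strictMono (hac : a < c) (hcb : c < b) : StrictMono (centeredExpMoment a b c) := by
  intro β₁ β₂ hβ
  set g : ℝ → ℝ := fun x => (x - c) * (exp (β₂ * (x - c)) - exp (β₁ * (x - c)))
  have hg : ∀ x ≠ c, 0 < g x := fun x hx => mul_exp_sub_exp_pos hβ (sub_ne_zero.2 hx)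
  have hgi : ∀ s t, IntervalIntegrable g volume s t := fun s t =>
    (by fun_prop : Continuous g).intervalIntegrable s t
  have hdiff : centeredExpMoment a b c β₂ - centeredExpMoment a b c β₁ = ∫ x in a..b, g x := by
    rw [centeredExpMoment, centeredExpMoment, ← intervalIntegral.integral_sub
      (integrand_intervalIntegrable a b c β₂) (integrand_intervalIntegrable a b c β₁)]
    simp only [g, mul_sub]
  have hleft : 0 < ∫ x in a..c, g x :=
    intervalIntegral.intervalIntegral_pos_of_pos_on (hgi a c)
      (fun x hx => hg x hx.2.ne) hac
  have hright : 0 < ∫ x in c..b, g x :=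
    intervalIntegral.intervalIntegral_pos_of_pos_on (hgi c b)
      (fun x hx => hg x hx.1.ne') hcb
  have := intervalIntegral.integral_add_adjacent_intervals (hgi a c) (hgi c b)
  linarith

/-- For `β ≥ 0` the integrand is at least `x - c` on `[a, c]` and at least `β (x - c)²` on
`[c, b]`; the choice of `β` makes the second bound win. -/
theorem exists_pos (hac : a < c) (hcb : c < b) : ∃ β, 0 < centeredExpMoment a b c β := by
  set β := 2 * (c - a) ^ 2 / (b - c) ^ 3
  have hβ : 0 ≤ β := by have := sub_pos.2 hcb; positivity
  have hleft : -(c - a) ^ 2 / 2 ≤ ∫ x in a..c, (x - c) * exp (β * (x - c)) := by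
    have hlin : ∫ x in a..c, (x - c) = -(c - a) ^ 2 / 2 := by
      rw [intervalIntegral.integral_comp_sub_right (fun x => x), sub_self, integral_id]; ring
    rw [← hlin]
    refine intervalIntegral.integral_mono_on hac.le
      (Continuous.intervalIntegrable (by fun_prop) _ _) (integrand_intervalIntegrable a c c β)
      fun x hx => ?_
    have : exp (β * (x - c)) ≤ 1 :=
      exp_le_one_iff.2 (mul_nonpos_of_nonneg_of_nonpos hβ (by linarith [hx.2]))
    nlinarith [exp_pos (β * (x - c)), hx.2]
  have hright : 2 * (c - a) ^ 2 / 3 ≤ ∫ x in c..b, (x - c) * exp (β * (x - c)) := by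
    have hsq : ∫ x in c..b, β * (x - c) ^ 2 = 2 * (c - a) ^ 2 / 3 := by
      have := (sub_pos.2 hcb).ne'
      rw [intervalIntegral.integral_const_mul,
        intervalIntegral.integral_comp_sub_right (fun x => x ^ 2), sub_self, integral_pow]
      simp only [β]
      field_simp
      ring
    rw [← hsq]
    refine intervalIntegral.integral_mono_on hcb.le
      (Continuous.intervalIntegrable (by fun_prop) _ _) (integrand_intervalIntegrable c b c β)
      fun x hx => ?_
    nlinarith [add_one_le_exp (β * (x - c)), hx.1]
  refine ⟨β, ?_⟩
  rw [centeredExpMoment, ← intervalIntegral.integral_add_adjacent_intervals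
    (integrand_intervalIntegrable a c c β) (integrand_intervalIntegrable c b c β)]
  nlinarith [sub_pos.2 hac]

theorem neg_eq (a b c β : ℝ) :
    centeredExpMoment a b c (-β) = -centeredExpMoment (-b) (-a) (-c) β := by
  rw [centeredExpMoment, centeredExpMoment, ← intervalIntegral.integral_neg,
    ← intervalIntegral.integral_comp_neg]
  congr 1; ext x; ring_nf

theorem exists_neg (hac : a < c) (hcb : c < b) : ∃ β, centeredExpMoment a b c β < 0 := by
  obtain ⟨β, hβ⟩ := exists_pos (neg_lt_neg hcb) (neg_lt_neg hac)
  exact ⟨-β, by rw [neg_eq]; linarith⟩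

theorem existsUnique_eq_zero (hac : a < c) (hcb : c < b) :
    ∃! β, centeredExpMoment a b c β = 0 := by
  obtain ⟨β₁, hβ₁⟩ := exists_neg hac hcb
  obtain ⟨β₂, hβ₂⟩ := exists_pos hac hcb
  have hle : β₁ ≤ β₂ := ((strictMono hac hcb).lt_iff_lt.1 (hβ₁.trans hβ₂)).le
  obtain ⟨β, -, hβ⟩ := intermediate_value_Icc hle (continuous a b c).continuousOn
    ⟨hβ₁.le, hβ₂.le⟩
  exact ⟨β, hβ, fun β' hβ' => (strictMono hac hcb).injective (hβ'.trans hβ.symm)⟩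

end centeredExpMoment

theorem integral_mul_exp_sub_eq (a b c α β : ℝ) :
    (∫ x in a..b, x * (α * exp (β * x))) - c * ∫ x in a..b, α * exp (β * x) =
      α * exp (β * c) * centeredExpMoment a b c β := by
  rw [centeredExpMoment, ← intervalIntegral.integral_const_mul,
    ← intervalIntegral.integral_const_mul,
    ← intervalIntegral.integral_sub (Continuous.intervalIntegrable (by fun_prop) _ _)
      (Continuous.intervalIntegrable (by fun_prop) _ _)]
  congr 1; ext x
  rw [show β * x = β * c + β * (x - c) by ring, exp_add]
  ring

theorem integral_exp_mul_pos {a b : ℝ} (β : ℝ) (hab : a < b) : 0 < ∫ x in a..b, exp (β * x) :=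
  intervalIntegral.intervalIntegral_pos_of_pos
    (Continuous.intervalIntegrable (by fun_prop) _ _) (fun x => exp_pos _) hab

theorem exp_density_mass_mean_iff {a b c M α β : ℝ} (hab : a < b) (hα : 0 < α) :
    ((∫ x in a..b, α * exp (β * x)) = M ∧ (∫ x in a..b, x * (α * exp (β * x))) = c * M) ↔
      centeredExpMoment a b c β = 0 ∧ α = M / ∫ x in a..b, exp (β * x) := by
  have hZ := integral_exp_mul_pos β hab
  have hrel := integral_mul_exp_sub_eq a b c α β
  rw [intervalIntegral.integral_const_mul] at hrel ⊢
  constructor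
  · rintro ⟨hmass, hmean⟩
    rw [hmass, hmean, sub_self] at hrel
    exact ⟨(mul_eq_zero.1 hrel.symm).resolve_left (by positivity),
      eq_div_of_mul_eq hZ.ne' hmass⟩
  · rintro ⟨hJ, rfl⟩
    have hmass : M / (∫ x in a..b, exp (β * x)) * ∫ x in a..b, exp (β * x) = M :=
      div_mul_cancel₀ M hZ.ne'
    rw [hJ, mul_zero, hmass, sub_eq_zero] at hrel
    exact ⟨hmass, hrel⟩

theorem exists_unique_exponential_density_general (Ki Ki1 Kbar M : ℝ)
    (hKbar : Kbar ∈ Set.Ioo Ki Ki1) (hM : 0 < M) :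
    ∃! p : ℝ × ℝ, 0 < p.1 ∧
      (∫ x in Ki..Ki1, p.1 * Real.exp (p.2 * x)) = M ∧
      (∫ x in Ki..Ki1, x * (p.1 * Real.exp (p.2 * x))) = Kbar * M := by
  have hK : Ki < Ki1 := hKbar.1.trans hKbar.2
  obtain ⟨β, hβ, hβ_unique⟩ := centeredExpMoment.existsUnique_eq_zero hKbar.1 hKbar.2
  have hα : 0 < M / ∫ x in Ki..Ki1, exp (β * x) := div_pos hM (integral_exp_mul_pos β hK)
  refine ⟨(_, β), ⟨hα, (exp_density_mass_mean_iff hK hα).2 ⟨hβ, rfl⟩⟩, ?_⟩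
  rintro ⟨α', β'⟩ ⟨hα', hmoments⟩
  obtain ⟨hβ', hα'_eq⟩ := (exp_density_mass_mean_iff hK hα').1 hmoments
  obtain rfl := hβ_unique β' hβ'
  exact Prod.ext hα'_eq rfl

theorem exists_unique_exponential_density (Ki Ki1 Kbar M : ℝ) (hK : Ki < Ki1)
    (hKbar : Kbar ∈ Set.Ioo Ki Ki1) (hM : 0 < M) :
    ∃! p : ℝ × ℝ, 0 < p.1 ∧
      (∫ x in Ki..Ki1, p.1 * Real.exp (p.2 * x)) = M ∧
      (∫ x in Ki..Ki1, x * (p.1 * Real.exp (p.2 * x))) = Kbar * M :=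
  exists_unique_exponential_density_general Ki Ki1 Kbar M hKbar hM
end

section
/- If g maximises the entropy E(g) = -∫_0^∞ g ln g over 𝒳, then for each i, g maximises E_i(g) = -∫_{K_i}^{K_{i+1}} g ln g over 𝒳_i. Conversely, if g maximises E_i over 𝒳_i for every i = 0,...,n, then g maximises E over 𝒳. -/
open MeasureTheory

noncomputable section

/-- The `i`-th bucket `[K_i, K_{i+1})` (up to null endpoints), with the
convention that the last bucket is `[K_n, ∞)`. -/
def bucket (n : ℕ) (K : ℕ → ℝ) (i : ℕ) : Set ℝ :=
  if i < n then Set.Ioc (K i) (K (i+1)) else Set.Ioi (K i)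

/-- The set of densities satisfying the global call and digital constraints. -/
def Xglobal (n : ℕ) (K C D : ℕ → ℝ) : Set (ℝ → ℝ) :=
  {g | Measurable g ∧ (∀ x, 0 ≤ g x) ∧
    IntegrableOn g (Set.Ioi (0:ℝ)) ∧
    IntegrableOn (fun x => x * g x) (Set.Ioi (0:ℝ)) ∧
    ∀ i ≤ n, (∫ x in Set.Ioi (K i), g x) = D i ∧
      (∫ x in Set.Ioi (K i), (x - K i) * g x) = C i}

/-- The set of densities satisfying the local mass and mean constraints on bucket `i`. -/
def Xloc (n : ℕ) (K C D : ℕ → ℝ) (i : ℕ) : Set (ℝ → ℝ) :=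
  {g | Measurable g ∧ (∀ x, 0 ≤ g x) ∧
    IntegrableOn g (bucket n K i) ∧
    IntegrableOn (fun x => x * g x) (bucket n K i) ∧
    (∫ x in bucket n K i, g x) = D i - D (i+1) ∧
    (∫ x in bucket n K i, x * g x)
      = (C i + K i * D i) - (C (i+1) + K (i+1) * D (i+1))}

/-- The Boltzmann–Shannon entropy of `g` on `[0, ∞)`. -/
def entropy (g : ℝ → ℝ) : ℝ := -∫ x in Set.Ioi (0:ℝ), g x * Real.log (g x)

/-- The Boltzmann–Shannon entropy of `g` on bucket `i`. -/
def entropyLoc (n : ℕ) (K : ℕ → ℝ) (i : ℕ) (g : ℝ → ℝ) : ℝ :=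
  -∫ x in bucket n K i, g x * Real.log (g x)

/-! ### Auxiliary lemmas -/

lemma bucket_meas (n : ℕ) (K : ℕ → ℝ) (i : ℕ) : MeasurableSet (bucket n K i) := by
  unfold bucket; split <;> measurability

lemma bucket_subset_Ioi (n : ℕ) (K : ℕ → ℝ) (i : ℕ) : bucket n K i ⊆ Set.Ioi (K i) := by
  unfold bucket; split
  · exact Set.Ioc_subset_Ioi_self
  · exact subset_rfl

lemma bucket_disjoint {n : ℕ} {K : ℕ → ℝ} (hKmono : StrictMono K) {i j : ℕ}
    (hij : i < j) (hj : j ≤ n) : Disjoint (bucket n K i) (bucket n K j) := by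
  have hbi : bucket n K i = Set.Ioc (K i) (K (i+1)) := if_pos (by omega)
  have h1 : K (i+1) ≤ K j := hKmono.monotone (by omega)
  exact hbi ▸ (Set.Ioc_disjoint_Ioi h1).mono_right (bucket_subset_Ioi n K j)

/-- Telescoping sum. -/
lemma tele_sum (f : ℕ → ℝ) : ∀ b a, a ≤ b + 1 →
    ∑ j ∈ Finset.Icc a b, (f j - f (j+1)) = f a - f (b+1) := by
  intro b
  induction b with
  | zero =>
    intro a ha
    interval_cases a <;> simp
  | succ b ih =>
    intro a ha
    rcases Nat.lt_or_ge a (b+2) with h | h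
    · have ha' : a ≤ b + 1 := by omega
      rw [Finset.sum_Icc_succ_top ha', ih a ha']
      ring
    · have : a = b + 2 := by omega
      subst this
      rw [Finset.Icc_eq_empty (by omega)]
      simp

/-- Downward induction: splitting `Ioi (K i)` into buckets `i, …, n`. -/
lemma key_split {n : ℕ} {K : ℕ → ℝ} (hKmono : StrictMono K) (f : ℝ → ℝ) :
    ∀ d i, i + d = n → (∀ j, i ≤ j → j ≤ n → IntegrableOn f (bucket n K j)) →
    IntegrableOn f (Set.Ioi (K i)) ∧
      (∫ x in Set.Ioi (K i), f x) = ∑ j ∈ Finset.Icc i n, ∫ x in bucket n K j, f x := by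
  intro d
  induction d with
  | zero =>
    intro i hi hint
    have hin : ¬ i < n := by omega
    have hb : bucket n K i = Set.Ioi (K i) := if_neg hin
    have hIcc : Finset.Icc i n = {i} := by rw [show n = i by omega, Finset.Icc_self]
    rw [hIcc, Finset.sum_singleton, hb]
    exact ⟨hb ▸ hint i le_rfl (by omega), rfl⟩
  | succ d ih =>
    intro i hi hint
    have hin : i < n := by omega
    have hbi : bucket n K i = Set.Ioc (K i) (K (i+1)) := if_pos hin
    have h1 : K i ≤ K (i+1) := (hKmono (lt_add_one i)).le
    obtain ⟨IH1, IH2⟩ := ih (i+1) (by omega) (fun j hj hj' => hint j (by omega) hj')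
    have hInt_i : IntegrableOn f (Set.Ioc (K i) (K (i+1))) := hbi ▸ hint i le_rfl (by omega)
    have hu : Set.Ioc (K i) (K (i+1)) ∪ Set.Ioi (K (i+1)) = Set.Ioi (K i) :=
      Set.Ioc_union_Ioi_eq_Ioi h1
    constructor
    · rw [← hu]; exact hInt_i.union IH1
    · rw [← hu, setIntegral_union Set.Ioc_disjoint_Ioi_same measurableSet_Ioi hInt_i IH1, IH2]
      have hIcc : Finset.Icc i n = insert i (Finset.Icc (i+1) n) := by
        ext x; simp only [Finset.mem_Icc, Finset.mem_insert]; omega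
      rw [hIcc, Finset.sum_insert (fun hmem => by
        have := Finset.mem_Icc.mp hmem; omega), hbi]

lemma split_step {n : ℕ} {K : ℕ → ℝ} (hKmono : StrictMono K) {i : ℕ} (hi : i < n)
    (f : ℝ → ℝ) (hf : IntegrableOn f (Set.Ioi (K i))) :
    (∫ x in Set.Ioi (K i), f x)
      = (∫ x in bucket n K i, f x) + ∫ x in Set.Ioi (K (i+1)), f x := by
  have hbi : bucket n K i = Set.Ioc (K i) (K (i+1)) := if_pos hi
  have h1 : K i ≤ K (i+1) := (hKmono (lt_add_one i)).le
  have hu : Set.Ioc (K i) (K (i+1)) ∪ Set.Ioi (K (i+1)) = Set.Ioi (K i) :=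
    Set.Ioc_union_Ioi_eq_Ioi h1
  have hf1 : IntegrableOn f (Set.Ioc (K i) (K (i+1))) := hf.mono_set Set.Ioc_subset_Ioi_self
  have hf2 : IntegrableOn f (Set.Ioi (K (i+1))) :=
    hf.mono_set (Set.Ioi_subset_Ioi h1)
  rw [hbi, ← hu, setIntegral_union Set.Ioc_disjoint_Ioi_same measurableSet_Ioi hf1 hf2]

section Main

variable {n : ℕ} {K C D : ℕ → ℝ}

lemma K_nonneg (hK0 : K 0 = 0) (hKmono : StrictMono K) (i : ℕ) : 0 ≤ K i :=
  hK0 ▸ hKmono.monotone (Nat.zero_le i)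

lemma bucket_subset_Ioi0 (hK0 : K 0 = 0) (hKmono : StrictMono K) (n i : ℕ) :
    bucket n K i ⊆ Set.Ioi (0:ℝ) :=
  (bucket_subset_Ioi n K i).trans (Set.Ioi_subset_Ioi (K_nonneg hK0 hKmono i))

/-- Global membership implies all local memberships. -/
lemma glob_to_loc (hK0 : K 0 = 0) (hKmono : StrictMono K)
    (hDlast : D (n+1) = 0) (hClast : C (n+1) = 0)
    {g : ℝ → ℝ} (hg : g ∈ Xglobal n K C D) : ∀ i ≤ n, g ∈ Xloc n K C D i := by
  obtain ⟨hm, hnn, hInt, hxInt, hcon⟩ := hg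
  intro i hi
  have hsub : ∀ j, Set.Ioi (K j) ⊆ Set.Ioi (0:ℝ) :=
    fun j => Set.Ioi_subset_Ioi (K_nonneg hK0 hKmono j)
  have hIg : ∀ j, IntegrableOn g (Set.Ioi (K j)) := fun j => hInt.mono_set (hsub j)
  have hIxg : ∀ j, IntegrableOn (fun x => x * g x) (Set.Ioi (K j)) :=
    fun j => hxInt.mono_set (hsub j)
  -- mean integral on Ioi (K j)
  have hxval : ∀ j ≤ n, (∫ x in Set.Ioi (K j), x * g x) = C j + K j * D j := by
    intro j hj
    have hsubst : (∫ x in Set.Ioi (K j), (x - K j) * g x)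
        = (∫ x in Set.Ioi (K j), x * g x) - K j * ∫ x in Set.Ioi (K j), g x := by
      simp only [sub_mul]
      rw [integral_sub (hIxg j) ((hIg j).const_mul (K j)), integral_const_mul]
    have h1 := (hcon j hj).1
    have h2 := (hcon j hj).2
    rw [hsubst, h1] at h2
    linarith
  refine ⟨hm, hnn, hInt.mono_set (bucket_subset_Ioi0 hK0 hKmono n i),
    hxInt.mono_set (bucket_subset_Ioi0 hK0 hKmono n i), ?_, ?_⟩
  · rcases Nat.lt_or_ge i n with hin | hin
    · have := split_step hKmono hin g (hIg i)
      rw [(hcon i hi).1, (hcon (i+1) (by omega)).1] at this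
      linarith
    · have hb : bucket n K i = Set.Ioi (K i) := if_neg (by omega)
      rw [hb, (hcon i hi).1, show i + 1 = n + 1 by omega, hDlast]
      ring
  · rcases Nat.lt_or_ge i n with hin | hin
    · have := split_step hKmono hin (fun x => x * g x) (hIxg i)
      rw [hxval i hi, hxval (i+1) (by omega)] at this
      linarith
    · have hb : bucket n K i = Set.Ioi (K i) := if_neg (by omega)
      rw [hb, hxval i hi, show i + 1 = n + 1 by omega, hDlast, hClast]
      ring

/-- All local memberships imply global membership. -/
lemma loc_to_glob (hK0 : K 0 = 0) (hKmono : StrictMono K)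
    (hDlast : D (n+1) = 0) (hClast : C (n+1) = 0)
    {g : ℝ → ℝ} (hg : ∀ i ≤ n, g ∈ Xloc n K C D i) : g ∈ Xglobal n K C D := by
  have hm : Measurable g := (hg 0 (Nat.zero_le n)).1
  have hnn : ∀ x, 0 ≤ g x := (hg 0 (Nat.zero_le n)).2.1
  have hkeyg : ∀ i ≤ n, IntegrableOn g (Set.Ioi (K i)) ∧
      (∫ x in Set.Ioi (K i), g x) = ∑ j ∈ Finset.Icc i n, ∫ x in bucket n K j, g x :=
    fun i hi => key_split hKmono g (n - i) i (by omega)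
      (fun j hj hj' => (hg j hj').2.2.1)
  have hkeyxg : ∀ i ≤ n, IntegrableOn (fun x => x * g x) (Set.Ioi (K i)) ∧
      (∫ x in Set.Ioi (K i), x * g x)
        = ∑ j ∈ Finset.Icc i n, ∫ x in bucket n K j, x * g x :=
    fun i hi => key_split hKmono (fun x => x * g x) (n - i) i (by omega)
      (fun j hj hj' => (hg j hj').2.2.2.1)
  have hD : ∀ i ≤ n, (∫ x in Set.Ioi (K i), g x) = D i := by
    intro i hi
    rw [(hkeyg i hi).2,
      Finset.sum_congr rfl (fun j hj => (hg j (Finset.mem_Icc.mp hj).2).2.2.2.2.1),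
      tele_sum D n i (by omega), hDlast, sub_zero]
  have hC : ∀ i ≤ n, (∫ x in Set.Ioi (K i), x * g x) = C i + K i * D i := by
    intro i hi
    rw [(hkeyxg i hi).2,
      Finset.sum_congr rfl (fun j hj => (hg j (Finset.mem_Icc.mp hj).2).2.2.2.2.2),
      tele_sum (fun j => C j + K j * D j) n i (by omega)]
    simp [hDlast, hClast]
  have h00 : Set.Ioi (0:ℝ) = Set.Ioi (K 0) := by rw [hK0]
  refine ⟨hm, hnn, h00 ▸ (hkeyg 0 (Nat.zero_le n)).1, h00 ▸ (hkeyxg 0 (Nat.zero_le n)).1,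
    fun i hi => ⟨hD i hi, ?_⟩⟩
  have hsubst : (∫ x in Set.Ioi (K i), (x - K i) * g x)
      = (∫ x in Set.Ioi (K i), x * g x) - K i * ∫ x in Set.Ioi (K i), g x := by
    simp only [sub_mul]
    rw [integral_sub (hkeyxg i hi).1 ((hkeyg i hi).1.const_mul (K i)), integral_const_mul]
  rw [hsubst, hC i hi, hD i hi]
  ring

/-- Entropy splits as a sum of local entropies. -/
lemma entropy_split (hK0 : K 0 = 0) (hKmono : StrictMono K) (n : ℕ) (g : ℝ → ℝ)
    (hInt : IntegrableOn (fun x => g x * Real.log (g x)) (Set.Ioi (0:ℝ))) :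
    entropy g = ∑ j ∈ Finset.Icc 0 n, entropyLoc n K j g := by
  have h00 : Set.Ioi (0:ℝ) = Set.Ioi (K 0) := by rw [hK0]
  obtain ⟨_, hsum⟩ := key_split hKmono (fun x => g x * Real.log (g x)) n 0 (by omega)
    (fun j hj hj' => hInt.mono_set (bucket_subset_Ioi0 hK0 hKmono n j))
  unfold entropy entropyLoc
  rw [h00, hsum, ← Finset.sum_neg_distrib]

end Main

theorem local_global_maximiser (n : ℕ) (K C D : ℕ → ℝ)
    (hK0 : K 0 = 0) (hKmono : StrictMono K)
    (hDlast : D (n+1) = 0) (hClast : C (n+1) = 0)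
    (hEnt : ∀ g ∈ Xglobal n K C D,
      IntegrableOn (fun x => g x * Real.log (g x)) (Set.Ioi (0:ℝ)))
    (hEntLoc : ∀ i ≤ n, ∀ g ∈ Xloc n K C D i,
      IntegrableOn (fun x => g x * Real.log (g x)) (bucket n K i)) :
    (∀ g, (g ∈ Xglobal n K C D ∧ ∀ h ∈ Xglobal n K C D, entropy h ≤ entropy g) →
      ∀ i ≤ n, g ∈ Xloc n K C D i ∧
        ∀ h ∈ Xloc n K C D i, entropyLoc n K i h ≤ entropyLoc n K i g) ∧
    (∀ g, (∀ i ≤ n, g ∈ Xloc n K C D i ∧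
        ∀ h ∈ Xloc n K C D i, entropyLoc n K i h ≤ entropyLoc n K i g) →
      g ∈ Xglobal n K C D ∧ ∀ h ∈ Xglobal n K C D, entropy h ≤ entropy g) := by
  classical
  constructor
  · rintro g ⟨hgX, hgmax⟩ i hi
    have hgl := glob_to_loc hK0 hKmono hDlast hClast hgX
    refine ⟨hgl i hi, ?_⟩
    intro h hh
    set h' : ℝ → ℝ := fun x => if x ∈ bucket n K i then h x else g x with hh'def
    have heq_i : Set.EqOn h' h (bucket n K i) := fun x hx => by simp [hh'def, hx]
    have heq_j : ∀ j ≤ n, j ≠ i → Set.EqOn h' g (bucket n K j) := by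
      intro j hj hji x hx
      have hxnot : x ∉ bucket n K i := by
        intro hxi
        rcases Nat.lt_or_ge i j with hij | hij
        · exact (bucket_disjoint hKmono hij hj).ne_of_mem hxi hx rfl
        · have hij' : j < i := by omega
          exact (bucket_disjoint hKmono hij' hi).ne_of_mem hx hxi rfl
      simp [hh'def, hxnot]
    have h'm : Measurable h' := Measurable.ite (bucket_meas n K i) hh.1 hgX.1
    have h'nn : ∀ x, 0 ≤ h' x := by
      intro x
      by_cases hx : x ∈ bucket n K i <;> simp [hh'def, hx, hh.2.1 x, hgX.2.1 x]
    have h'loc : ∀ j ≤ n, h' ∈ Xloc n K C D j := by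
      intro j hj
      by_cases hji : j = i
      · subst hji
        obtain ⟨_, _, hI1, hI2, hc1, hc2⟩ := hh
        refine ⟨h'm, h'nn, hI1.congr_fun heq_i.symm (bucket_meas n K j),
          hI2.congr_fun (fun x hx => by simp [heq_i hx]) (bucket_meas n K j), ?_, ?_⟩
        · rw [setIntegral_congr_fun (bucket_meas n K j) heq_i]; exact hc1
        · rw [setIntegral_congr_fun (bucket_meas n K j)
            (fun x hx => by simp [heq_i hx] : Set.EqOn (fun x => x * h' x) (fun x => x * h x) (bucket n K j))]
          exact hc2
      · obtain ⟨_, _, hI1, hI2, hc1, hc2⟩ := hgl j hj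
        refine ⟨h'm, h'nn, hI1.congr_fun (heq_j j hj hji).symm (bucket_meas n K j),
          hI2.congr_fun (fun x hx => by simp [heq_j j hj hji hx]) (bucket_meas n K j), ?_, ?_⟩
        · rw [setIntegral_congr_fun (bucket_meas n K j) (heq_j j hj hji)]; exact hc1
        · rw [setIntegral_congr_fun (bucket_meas n K j)
            (fun x hx => by simp [heq_j j hj hji hx] :
              Set.EqOn (fun x => x * h' x) (fun x => x * g x) (bucket n K j))]
          exact hc2
    have h'X : h' ∈ Xglobal n K C D := loc_to_glob hK0 hKmono hDlast hClast h'loc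
    have hle := hgmax h' h'X
    rw [entropy_split hK0 hKmono n h' (hEnt h' h'X),
      entropy_split hK0 hKmono n g (hEnt g hgX)] at hle
    have hmem : i ∈ Finset.Icc 0 n := by simp [hi]
    rw [← Finset.add_sum_erase _ _ hmem, ← Finset.add_sum_erase _ _ hmem] at hle
    have hErest : ∑ j ∈ (Finset.Icc 0 n).erase i, entropyLoc n K j h'
        = ∑ j ∈ (Finset.Icc 0 n).erase i, entropyLoc n K j g := by
      refine Finset.sum_congr rfl (fun j hj => ?_)
      have hji : j ≠ i := Finset.ne_of_mem_erase hj
      have hjn : j ≤ n := (Finset.mem_Icc.mp (Finset.mem_of_mem_erase hj)).2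
      unfold entropyLoc
      rw [setIntegral_congr_fun (bucket_meas n K j)
        (fun x hx => by simp [heq_j j hjn hji hx] :
          Set.EqOn (fun x => h' x * Real.log (h' x)) (fun x => g x * Real.log (g x)) (bucket n K j))]
    rw [hErest] at hle
    have hEi : entropyLoc n K i h' = entropyLoc n K i h := by
      unfold entropyLoc
      rw [setIntegral_congr_fun (bucket_meas n K i)
        (fun x hx => by simp [heq_i hx] :
          Set.EqOn (fun x => h' x * Real.log (h' x)) (fun x => h x * Real.log (h x)) (bucket n K i))]
    rw [hEi] at hle
    linarith
  · intro g hg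
    have hgX : g ∈ Xglobal n K C D :=
      loc_to_glob hK0 hKmono hDlast hClast (fun i hi => (hg i hi).1)
    refine ⟨hgX, fun h hh => ?_⟩
    rw [entropy_split hK0 hKmono n h (hEnt h hh),
      entropy_split hK0 hKmono n g (hEnt g hgX)]
    refine Finset.sum_le_sum (fun j hj => ?_)
    have hjn : j ≤ n := (Finset.mem_Icc.mp hj).2
    exact (hg j hjn).2 h (glob_to_loc hK0 hKmono hDlast hClast hh j hjn)

end
end
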